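/- For every smooth compactly supported function u on R^{2m} with m = 2k+1 odd and every τ > 0, the L² norm squared of ∇(-Δ + τ)^k u equals the sum over j from 1 to m of (m-1 choose j-1)·τ^{m-j} times the L² norm squared of ∇^j u. -/

import Mathlib

open MeasureTheory

/-- The Laplacian of a real-valued function on Euclidean space. -/
noncomputable def lap {N : ℕ} (u : EuclideanSpace ℝ (Fin N) → ℝ) :
    EuclideanSpace ℝ (Fin N) → ℝ :=
  fun x => ∑ i, fderiv ℝ (fun y => fderiv ℝ u y (EuclideanSpace.single i 1)) x
    (EuclideanSpace.single i 1)

/-- Pointwise squared length of the gradient. -/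
noncomputable def gradSq {N : ℕ} (u : EuclideanSpace ℝ (Fin N) → ℝ) :
    EuclideanSpace ℝ (Fin N) → ℝ :=
  fun x => ∑ i, (fderiv ℝ u x (EuclideanSpace.single i 1)) ^ 2

/-- Pointwise squared length of the `j`-th order gradient:
`(Δ^{j/2} u)²` for `j` even and `|∇ Δ^{(j-1)/2} u|²` for `j` odd. -/
noncomputable def nablaSq {N : ℕ} (j : ℕ) (u : EuclideanSpace ℝ (Fin N) → ℝ) :
    EuclideanSpace ℝ (Fin N) → ℝ :=
  if j % 2 = 0 then fun x => ((lap^[j / 2]) u x) ^ 2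
  else gradSq ((lap^[(j - 1) / 2]) u)

namespace PolyAux
variable {N : ℕ}
local notation "E" => EuclideanSpace ℝ (Fin N)

noncomputable def pd (i : Fin N) (v : E → ℝ) : E → ℝ :=
  fun x => fderiv ℝ v x (EuclideanSpace.single i 1)

lemma lap_eq (v : E → ℝ) : lap v = fun x => ∑ i, pd i (pd i v) x := rfl

lemma gradSq_eq (v : E → ℝ) : gradSq v = fun x => ∑ i, pd i v x * pd i v x := by
  funext x; simp [gradSq, pd, pow_two]

lemma pd_contDiff {v : E → ℝ} (hv : ContDiff ℝ (⊤ : ℕ∞) v) (i : Fin N) :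
    ContDiff ℝ (⊤ : ℕ∞) (pd i v) :=
  (hv.fderiv_right (by simp)).clm_apply contDiff_const

lemma pd_supp {v : E → ℝ} (hs : HasCompactSupport v) (i : Fin N) :
    HasCompactSupport (pd i v) :=
  (hs.fderiv ℝ).comp_left (g := fun L : E →L[ℝ] ℝ => L (EuclideanSpace.single i 1)) rfl

lemma hcs_sum {ι : Type*} (s : Finset ι) (f : ι → E → ℝ)
    (h : ∀ i ∈ s, HasCompactSupport (f i)) :
    HasCompactSupport (fun x => ∑ i ∈ s, f i x) := by
  classical
  induction s using Finset.cons_induction with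
  | empty => simp only [Finset.sum_empty]; exact HasCompactSupport.zero
  | cons a s ha ih =>
      simp only [Finset.sum_cons]
      exact (h a (Finset.mem_cons_self a s)).add (ih fun i hi => h i (Finset.mem_cons_of_mem hi))

lemma lap_contDiff {v : E → ℝ} (hv : ContDiff ℝ (⊤ : ℕ∞) v) : ContDiff ℝ (⊤ : ℕ∞) (lap v) := by
  rw [lap_eq]
  exact ContDiff.sum fun i _ => pd_contDiff (pd_contDiff hv i) i

lemma lap_supp {v : E → ℝ} (hv : HasCompactSupport v) : HasCompactSupport (lap v) := by
  rw [lap_eq]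
  exact hcs_sum _ _ fun i _ => pd_supp (pd_supp hv i) i

lemma iter_contDiff {v : E → ℝ} (hv : ContDiff ℝ (⊤ : ℕ∞) v) (p : ℕ) :
    ContDiff ℝ (⊤ : ℕ∞) (lap^[p] v) := by
  induction p with
  | zero => exact hv
  | succ p ih => rw [Function.iterate_succ_apply']; exact lap_contDiff ih

lemma iter_supp {v : E → ℝ} (hv : HasCompactSupport v) (p : ℕ) :
    HasCompactSupport (lap^[p] v) := by
  induction p with
  | zero => exact hv
  | succ p ih => rw [Function.iterate_succ_apply']; exact lap_supp ih

lemma integrable_mul {f g : E → ℝ} (hf : ContDiff ℝ (⊤ : ℕ∞) f) (hsf : HasCompactSupport f)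
    (hg : ContDiff ℝ (⊤ : ℕ∞) g) :
    Integrable (fun x => f x * g x) (volume : Measure E) :=
  (hf.continuous.mul hg.continuous).integrable_of_hasCompactSupport hsf.mul_right

/-- Integration by parts. -/
lemma ibp {f g : E → ℝ} (hf : ContDiff ℝ (⊤ : ℕ∞) f) (hsf : HasCompactSupport f)
    (hg : ContDiff ℝ (⊤ : ℕ∞) g) (hsg : HasCompactSupport g) (i : Fin N) :
    ∫ x, pd i f x * g x = -∫ x, pd i g x * f x := by
  obtain ⟨C, hC⟩ := hf.lipschitzWith_of_hasCompactSupport hsf (by simp)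
  obtain ⟨D, hD⟩ := hg.lipschitzWith_of_hasCompactSupport hsg (by simp)
  have h := LipschitzWith.integral_lineDeriv_mul_eq (μ := (volume : Measure E))
    hC hD hsg (EuclideanSpace.single i 1)
  have e1 : ∀ x : E, lineDeriv ℝ f x (EuclideanSpace.single i 1) = pd i f x := fun x =>
    (hf.differentiable (by simp) x).lineDeriv_eq_fderiv
  have e2 : ∀ x : E, lineDeriv ℝ g x (-(EuclideanSpace.single i 1)) = -pd i g x := fun x => by
    rw [(hg.differentiable (by simp) x).lineDeriv_eq_fderiv, map_neg]; rfl
  simp only [e1, e2, neg_mul] at h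
  rw [h, integral_neg]

/-- Green's identity: `∫ ∇f · ∇g = -∫ f Δg`. -/
lemma gradB_eq {f g : E → ℝ} (hf : ContDiff ℝ (⊤ : ℕ∞) f) (hsf : HasCompactSupport f)
    (hg : ContDiff ℝ (⊤ : ℕ∞) g) (hsg : HasCompactSupport g) :
    ∫ x, (∑ i, pd i f x * pd i g x) = -∫ x, f x * lap g x := by
  rw [integral_finset_sum _ fun i _ =>
    integrable_mul (pd_contDiff hf i) (pd_supp hsf i) (pd_contDiff hg i)]
  have h : ∀ i : Fin N, ∫ x, pd i f x * pd i g x = -∫ x, pd i (pd i g) x * f x := fun i =>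
    ibp hf hsf (pd_contDiff hg i) (pd_supp hsg i) i
  calc ∑ i : Fin N, ∫ x, pd i f x * pd i g x
      = ∑ i : Fin N, -∫ x, pd i (pd i g) x * f x := Finset.sum_congr rfl fun i _ => h i
    _ = -∑ i : Fin N, ∫ x, pd i (pd i g) x * f x := by simp
    _ = -∫ x, ∑ i : Fin N, pd i (pd i g) x * f x := by
        rw [← integral_finset_sum _ fun i (_ : i ∈ Finset.univ) =>
          integrable_mul (pd_contDiff (pd_contDiff hg i) i) (pd_supp (pd_supp hsg i) i) hf]
    _ = -∫ x, f x * lap g x := by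
        refine congrArg Neg.neg (integral_congr_ae (Filter.Eventually.of_forall fun x => ?_))
        simp only [lap_eq, Finset.mul_sum]
        exact Finset.sum_congr rfl fun i _ => mul_comm _ _

lemma B_symm {f g : E → ℝ} (hf : ContDiff ℝ (⊤ : ℕ∞) f) (hsf : HasCompactSupport f)
    (hg : ContDiff ℝ (⊤ : ℕ∞) g) (hsg : HasCompactSupport g) :
    ∫ x, lap f x * g x = ∫ x, f x * lap g x := by
  have h1 := gradB_eq hf hsf hg hsg
  have h2 := gradB_eq hg hsg hf hsf
  have h : ∫ x, (∑ i, pd i f x * pd i g x) = ∫ x, (∑ i, pd i g x * pd i f x) := by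
    congr 1; funext x; exact Finset.sum_congr rfl fun i _ => mul_comm _ _
  rw [h, h2] at h1
  have h3 : (∫ x, g x * lap f x) = ∫ x, f x * lap g x := neg_injective h1
  rw [← h3]; congr 1; funext x; exact mul_comm _ _

lemma nablaSq_odd (r : ℕ) (u : E → ℝ) : nablaSq (2 * r + 1) u = gradSq (lap^[r] u) := by
  rw [nablaSq, if_neg (by omega), show (2 * r + 1 - 1) / 2 = r from by omega]

lemma nablaSq_even (r : ℕ) (u : E → ℝ) :
    nablaSq (2 * r) u = fun x => (lap^[r] u x) ^ 2 := by
  rw [nablaSq, if_pos (by omega), show 2 * r / 2 = r from by omega]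

lemma key1 {u : E → ℝ} (hu : ContDiff ℝ (⊤ : ℕ∞) u) (hsupp : HasCompactSupport u) : ∀ b a : ℕ,
    ∫ x, lap^[a] u x * lap^[b] u x = ∫ x, lap^[a + b] u x * u x := by
  intro b
  induction b with
  | zero => intro a; simp
  | succ b ih =>
      intro a
      have h1 : ∫ x, lap^[a] u x * lap^[b + 1] u x
          = ∫ x, lap^[a + 1] u x * lap^[b] u x := by
        rw [Function.iterate_succ_apply' lap b u,
          ← B_symm (iter_contDiff hu a) (iter_supp hsupp a)
            (iter_contDiff hu b) (iter_supp hsupp b),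
          ← Function.iterate_succ_apply' lap a u]
      rw [h1, ih (a + 1), show a + 1 + b = a + (b + 1) from by omega]

lemma key2 {u : E → ℝ} (hu : ContDiff ℝ (⊤ : ℕ∞) u) (hsupp : HasCompactSupport u) (p q : ℕ) :
    ∫ x, (∑ i, pd i (lap^[p] u) x * pd i (lap^[q] u) x)
      = (-1 : ℝ) ^ (p + q) * ∫ x, nablaSq (p + q + 1) u x := by
  have h0 : ∫ x, (∑ i, pd i (lap^[p] u) x * pd i (lap^[q] u) x)
      = -∫ x, lap^[p] u x * lap^[q + 1] u x := by
    rw [gradB_eq (iter_contDiff hu p) (iter_supp hsupp p)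
      (iter_contDiff hu q) (iter_supp hsupp q)]
    congr 2
    funext x
    rw [Function.iterate_succ_apply' lap q u]
  rw [h0, key1 hu hsupp]
  rcases Nat.even_or_odd (p + q) with ⟨r, hr⟩ | ⟨r, hr⟩
  · have hs : p + (q + 1) = r + (r + 1) := by omega
    rw [hs, ← key1 hu hsupp (r + 1) r]
    have h2 : ∫ x, lap^[r] u x * lap^[r + 1] u x
        = -∫ x, (∑ i, pd i (lap^[r] u) x * pd i (lap^[r] u) x) := by
      rw [gradB_eq (iter_contDiff hu r) (iter_supp hsupp r)
        (iter_contDiff hu r) (iter_supp hsupp r)]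
      rw [neg_neg]
      congr 1
      funext x
      rw [Function.iterate_succ_apply' lap r u]
    rw [h2, neg_neg]
    have h3 : p + q + 1 = 2 * r + 1 := by omega
    rw [h3, nablaSq_odd, gradSq_eq]
    have h4 : (-1 : ℝ) ^ (p + q) = 1 := by
      rw [hr]; exact Even.neg_one_pow ⟨r, rfl⟩
    rw [h4, one_mul]
  · have hs : p + (q + 1) = (r + 1) + (r + 1) := by omega
    rw [hs, ← key1 hu hsupp (r + 1) (r + 1)]
    have h3 : p + q + 1 = 2 * (r + 1) := by omega
    rw [h3, nablaSq_even]
    have h4 : (-1 : ℝ) ^ (p + q) = -1 := by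
      rw [hr]; exact Odd.neg_one_pow ⟨r, by omega⟩
    rw [h4, neg_one_mul]
    refine congrArg Neg.neg (integral_congr_ae (Filter.Eventually.of_forall fun x => ?_))
    simp [pow_two]

lemma pd_sum {ι : Type*} (s : Finset ι) (c : ι → ℝ) (f : ι → E → ℝ)
    (hf : ∀ i ∈ s, Differentiable ℝ (f i)) (j : Fin N) :
    pd j (fun x => ∑ i ∈ s, c i * f i x) = fun x => ∑ i ∈ s, c i * pd j (f i) x := by
  funext x
  have h1 : ∀ i ∈ s, DifferentiableAt ℝ (fun y => c i * f i y) x := fun i hi =>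
    ((hf i hi) x).const_mul (c i)
  simp only [pd]
  rw [fderiv_fun_sum h1, ContinuousLinearMap.sum_apply]
  refine Finset.sum_congr rfl fun i hi => ?_
  rw [fderiv_const_mul ((hf i hi) x)]
  rfl

lemma lap_sum {ι : Type*} (s : Finset ι) (c : ι → ℝ) (f : ι → E → ℝ)
    (hf : ∀ i ∈ s, ContDiff ℝ (⊤ : ℕ∞) (f i)) :
    lap (fun x => ∑ i ∈ s, c i * f i x) = fun x => ∑ i ∈ s, c i * lap (f i) x := by
  have h1 := pd_sum s c f (fun i hi => (hf i hi).differentiable (by simp))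
  funext x
  simp only [lap_eq]
  have h2 : ∀ j : Fin N, pd j (pd j (fun x => ∑ i ∈ s, c i * f i x)) x
      = ∑ i ∈ s, c i * pd j (pd j (f i)) x := by
    intro j
    rw [h1 j, pd_sum s c (fun i => pd j (f i))
      (fun i hi => (pd_contDiff (hf i hi) j).differentiable (by simp)) j]
  simp only [h2]
  rw [Finset.sum_comm]
  simp [Finset.mul_sum]

lemma pascal_key (τ : ℝ) (n : ℕ) (g : ℕ → ℝ) :
    τ * (∑ i ∈ Finset.range (n+1), ((n.choose i : ℝ) * τ^(n-i)) * g i)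
      + ∑ i ∈ Finset.range (n+1), ((n.choose i : ℝ) * τ^(n-i)) * g (i+1)
    = ∑ i ∈ Finset.range (n+2), (((n+1).choose i : ℝ) * τ^(n+1-i)) * g i := by
  have hR : ∑ i ∈ Finset.range (n+2), (((n+1).choose i : ℝ) * τ^(n+1-i)) * g i
      = (∑ i ∈ Finset.range (n+1),
          (((n.choose i : ℝ) + (n.choose (i+1) : ℝ)) * τ^(n-i)) * g (i+1))
        + τ^(n+1) * g 0 := by
    rw [Finset.sum_range_succ']
    congr 1
    · refine Finset.sum_congr rfl fun i hi => ?_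
      rw [Nat.choose_succ_succ, show n + 1 - (i+1) = n - i from by omega]
      push_cast; ring
    · simp
  have hL1 : τ * (∑ i ∈ Finset.range (n+1), ((n.choose i : ℝ) * τ^(n-i)) * g i)
      = (∑ i ∈ Finset.range (n+1), ((n.choose (i+1) : ℝ) * τ^(n-i)) * g (i+1))
        + τ^(n+1) * g 0 := by
    rw [Finset.mul_sum, Finset.sum_range_succ']
    congr 1
    · rw [Finset.sum_range_succ]
      have hz : ((n.choose (n+1) : ℝ) * τ^(n-n)) * g (n+1) = 0 := by
        simp [Nat.choose_eq_zero_of_lt]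
      rw [hz, add_zero]
      refine Finset.sum_congr rfl fun i hi => ?_
      have hi' : i < n := Finset.mem_range.mp hi
      rw [show n - i = (n - (i+1)) + 1 from by omega]
      ring
    · simp [pow_succ]; ring
  rw [hL1, hR]
  have hc : ∑ i ∈ Finset.range (n+1),
      (((n.choose i : ℝ) + (n.choose (i+1) : ℝ)) * τ^(n-i)) * g (i+1)
      = ∑ i ∈ Finset.range (n+1), (((n.choose (i+1) : ℝ) * τ^(n-i)) * g (i+1)
          + ((n.choose i : ℝ) * τ^(n-i)) * g (i+1)) := by
    refine Finset.sum_congr rfl fun i hi => by ring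
  rw [hc, Finset.sum_add_distrib]
  ring

lemma expand {u : E → ℝ} (hu : ContDiff ℝ (⊤ : ℕ∞) u) (τ : ℝ) (n : ℕ) :
    (fun (v : E → ℝ) (x : E) => τ * v x - lap v x)^[n] u
    = fun x => ∑ i ∈ Finset.range (n+1),
        ((n.choose i : ℝ) * τ^(n-i) * (-1:ℝ)^i) * lap^[i] u x := by
  induction n with
  | zero => funext x; simp
  | succ n ih =>
      rw [Function.iterate_succ_apply', ih]
      funext x
      show τ * (∑ i ∈ Finset.range (n+1),
          ((n.choose i : ℝ) * τ^(n-i) * (-1:ℝ)^i) * lap^[i] u x)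
        - lap (fun x => ∑ i ∈ Finset.range (n+1),
            ((n.choose i : ℝ) * τ^(n-i) * (-1:ℝ)^i) * lap^[i] u x) x = _
      rw [lap_sum (Finset.range (n+1)) (fun i => (n.choose i : ℝ) * τ^(n-i) * (-1:ℝ)^i)
        (fun i => lap^[i] u) (fun i _ => iter_contDiff hu i)]
      have hkey := pascal_key τ n (fun i => (-1:ℝ)^i * lap^[i] u x)
      have hL : τ * (∑ i ∈ Finset.range (n+1),
            ((n.choose i : ℝ) * τ^(n-i) * (-1:ℝ)^i) * lap^[i] u x)
          - (∑ i ∈ Finset.range (n+1),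
            ((n.choose i : ℝ) * τ^(n-i) * (-1:ℝ)^i) * lap (lap^[i] u) x)
          = τ * (∑ i ∈ Finset.range (n+1),
              ((n.choose i : ℝ) * τ^(n-i)) * ((-1:ℝ)^i * lap^[i] u x))
            + ∑ i ∈ Finset.range (n+1),
              ((n.choose i : ℝ) * τ^(n-i)) * ((-1:ℝ)^(i+1) * lap^[i+1] u x) := by
        simp only [← Function.iterate_succ_apply' lap]
        rw [sub_eq_add_neg, ← Finset.sum_neg_distrib]
        congr 1
        · rw [Finset.mul_sum, Finset.mul_sum]
          exact Finset.sum_congr rfl fun i _ => by ring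
        · exact Finset.sum_congr rfl fun i _ => by ring
      rw [hL, hkey]
      exact Finset.sum_congr rfl fun i _ => by ring

lemma sum_sq_swap {ι : Type*} (s : Finset ι) (c : ι → ℝ) (P : Fin N → ι → ℝ) :
    ∑ j : Fin N, (∑ i ∈ s, c i * P j i) * (∑ i ∈ s, c i * P j i)
    = ∑ i ∈ s, ∑ i' ∈ s, (c i * c i') * (∑ j : Fin N, P j i * P j i') := by
  simp only [Finset.sum_mul, Finset.mul_sum]
  rw [Finset.sum_comm]
  refine Finset.sum_congr rfl fun i _ => ?_
  rw [Finset.sum_comm]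
  refine Finset.sum_congr rfl fun i' _ => ?_
  exact Finset.sum_congr rfl fun j _ => by ring

end PolyAux

open PolyAux in
theorem polyharmonic_gradient_identity_odd (k m : ℕ) (hm : m = 2 * k + 1)
    (τ : ℝ) (hτ : 0 < τ) (u : EuclideanSpace ℝ (Fin (2 * m)) → ℝ)
    (hu : ContDiff ℝ (⊤ : ℕ∞) u) (hsupp : HasCompactSupport u) :
    ∫ x, gradSq (((fun v x => τ * v x - lap v x)^[k]) u) x =
      ∑ j ∈ Finset.Icc 1 m,
        ((m - 1).choose (j - 1) : ℝ) * τ ^ (m - j) * ∫ x, nablaSq j u x := by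
  classical
  subst hm
  set A : ℕ → ℝ := fun j => ∫ x, nablaSq j u x with hA
  set c : ℕ → ℝ := fun i => (k.choose i : ℝ) * τ^(k-i) * (-1:ℝ)^i with hc
  have hint : ∀ p q : ℕ, Integrable
      (fun x => ∑ j, pd j (lap^[p] u) x * pd j (lap^[q] u) x) volume := by
    intro p q
    refine integrable_finset_sum _ fun j _ => ?_
    exact integrable_mul (pd_contDiff (iter_contDiff hu p) j)
      (pd_supp (iter_supp hsupp p) j) (pd_contDiff (iter_contDiff hu q) j)
  rw [expand hu τ k]
  have hgs : (fun x => gradSq (fun x => ∑ i ∈ Finset.range (k+1),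
        ((k.choose i : ℝ) * τ^(k-i) * (-1:ℝ)^i) * lap^[i] u x) x)
      = fun x => ∑ i ∈ Finset.range (k+1), ∑ i' ∈ Finset.range (k+1),
          (c i * c i') * (∑ j, pd j (lap^[i] u) x * pd j (lap^[i'] u) x) := by
    funext x
    have hpd : ∀ j, pd j (fun x => ∑ i ∈ Finset.range (k+1), c i * lap^[i] u x)
        = fun x => ∑ i ∈ Finset.range (k+1), c i * pd j (lap^[i] u) x :=
      fun j => pd_sum _ c _ (fun i _ => (iter_contDiff hu i).differentiable (by simp)) j
    rw [gradSq_eq]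
    simp only [hc] at hpd ⊢
    simp only [hpd]
    exact sum_sq_swap _ _ _
  rw [show (∫ x, gradSq (fun x => ∑ i ∈ Finset.range (k+1),
        ((k.choose i : ℝ) * τ^(k-i) * (-1:ℝ)^i) * lap^[i] u x) x)
      = ∫ x, ∑ i ∈ Finset.range (k+1), ∑ i' ∈ Finset.range (k+1),
          (c i * c i') * (∑ j, pd j (lap^[i] u) x * pd j (lap^[i'] u) x)
    from congrArg _ hgs]
  rw [integral_finset_sum _ fun i _ => integrable_finset_sum _ fun i' _ =>
    (hint i i').const_mul _]
  have hswap : ∀ i ∈ Finset.range (k+1),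
      (∫ x, ∑ i' ∈ Finset.range (k+1),
        (c i * c i') * (∑ j, pd j (lap^[i] u) x * pd j (lap^[i'] u) x))
      = ∑ i' ∈ Finset.range (k+1), (c i * c i') * ((-1:ℝ)^(i+i') * A (i+i'+1)) := by
    intro i _
    rw [integral_finset_sum _ fun i' _ => (hint i i').const_mul _]
    refine Finset.sum_congr rfl fun i' _ => ?_
    rw [integral_const_mul, key2 hu hsupp i i']
  rw [Finset.sum_congr rfl hswap]
  -- coefficient simplification
  have hcoef : ∀ i ∈ Finset.range (k+1), ∀ i' ∈ Finset.range (k+1),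
      (c i * c i') * ((-1:ℝ)^(i+i') * A (i+i'+1))
      = ((k.choose i : ℝ) * (k.choose i' : ℝ)) * τ^(2*k - (i+i')) * A (i+i'+1) := by
    intro i hi i' hi'
    have hik : i ≤ k := by simpa using Nat.lt_succ_iff.mp (Finset.mem_range.mp hi)
    have hik' : i' ≤ k := by simpa using Nat.lt_succ_iff.mp (Finset.mem_range.mp hi')
    have hτp : τ^(k-i) * τ^(k-i') = τ^(2*k-(i+i')) := by
      rw [← pow_add]; congr 1; omega
    have hsign : (-1:ℝ)^i * (-1:ℝ)^i' * (-1:ℝ)^(i+i') = 1 := by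
      rw [← pow_add, ← pow_add]
      exact Even.neg_one_pow ⟨i+i', by omega⟩
    calc (c i * c i') * ((-1:ℝ)^(i+i') * A (i+i'+1))
        = ((k.choose i : ℝ) * (k.choose i' : ℝ)) * (τ^(k-i) * τ^(k-i'))
          * (((-1:ℝ)^i * (-1:ℝ)^i' * (-1:ℝ)^(i+i')) * A (i+i'+1)) := by
          rw [hc]; ring
      _ = _ := by rw [hτp, hsign, one_mul]
  rw [Finset.sum_congr rfl fun i hi => Finset.sum_congr rfl fun i' hi' => hcoef i hi i' hi']
  -- reindex the double sum via the antidiagonal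
  set G : ℕ × ℕ → ℝ := fun p =>
    ((k.choose p.1 : ℝ) * (k.choose p.2 : ℝ)) * τ^(2*k - (p.1+p.2)) * A (p.1+p.2+1) with hG
  have hprod : ∑ i ∈ Finset.range (k+1), ∑ i' ∈ Finset.range (k+1),
      ((k.choose i : ℝ) * (k.choose i' : ℝ)) * τ^(2*k - (i+i')) * A (i+i'+1)
      = ∑ p ∈ Finset.range (k+1) ×ˢ Finset.range (k+1), G p := by
    rw [Finset.sum_product]
  rw [hprod]
  set T : Finset (ℕ × ℕ) :=
    (Finset.range (2*k+1) ×ˢ Finset.range (2*k+1)).filter (fun p => p.1 + p.2 ≤ 2*k) with hT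
  have hsub : Finset.range (k+1) ×ˢ Finset.range (k+1) ⊆ T := by
    intro p hp
    simp only [hT, Finset.mem_filter, Finset.mem_product, Finset.mem_range] at *
    omega
  have hvan : ∀ p ∈ T, p ∉ Finset.range (k+1) ×ˢ Finset.range (k+1) → G p = 0 := by
    intro p _ hp
    simp only [Finset.mem_product, Finset.mem_range, not_and_or, not_lt] at hp
    rcases hp with h | h
    · have : k.choose p.1 = 0 := Nat.choose_eq_zero_of_lt (by omega)
      simp [hG, this]
    · have : k.choose p.2 = 0 := Nat.choose_eq_zero_of_lt (by omega)
      simp [hG, this]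
  rw [Finset.sum_subset hsub hvan]
  have hbi : T = (Finset.range (2*k+1)).biUnion (fun s => Finset.HasAntidiagonal.antidiagonal s) := by
    ext p
    simp only [hT, Finset.mem_filter, Finset.mem_product, Finset.mem_range,
      Finset.mem_biUnion, Finset.HasAntidiagonal.mem_antidiagonal]
    constructor
    · rintro ⟨⟨h1, h2⟩, h3⟩; exact ⟨p.1 + p.2, by omega, rfl⟩
    · rintro ⟨s, hs, hp⟩; omega
  have hdisj : Set.PairwiseDisjoint ↑(Finset.range (2*k+1))
      (fun s => (Finset.HasAntidiagonal.antidiagonal s : Finset (ℕ × ℕ))) := by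
    intro a _ b _ hab
    refine Finset.disjoint_left.mpr fun p hp hp' => hab ?_
    rw [Finset.HasAntidiagonal.mem_antidiagonal] at hp hp'
    omega
  rw [hbi, Finset.sum_biUnion hdisj]
  have hinner : ∀ s ∈ Finset.range (2*k+1),
      ∑ p ∈ Finset.HasAntidiagonal.antidiagonal s, G p = ((2*k).choose s : ℝ) * τ^(2*k-s) * A (s+1) := by
    intro s _
    have h1 : ∀ p ∈ Finset.HasAntidiagonal.antidiagonal s,
        G p = ((k.choose p.1 : ℝ) * (k.choose p.2 : ℝ)) * (τ^(2*k-s) * A (s+1)) := by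
      intro p hp
      rw [Finset.HasAntidiagonal.mem_antidiagonal] at hp
      rw [hG]
      simp only [hp]
      ring
    rw [Finset.sum_congr rfl h1, ← Finset.sum_mul]
    have h2 : ∑ p ∈ Finset.HasAntidiagonal.antidiagonal s, (k.choose p.1 : ℝ) * (k.choose p.2 : ℝ)
        = ((2*k).choose s : ℝ) := by
      rw [show 2*k = k + k from by omega, Nat.add_choose_eq]
      push_cast
      rfl
    rw [h2]
    ring
  rw [Finset.sum_congr rfl hinner]
  -- reindex the RHS Icc sum
  rw [show Finset.Icc 1 (2*k+1) = Finset.Ico 1 (2*k+2) from (Finset.Ico_add_one_right_eq_Icc 1 _).symm,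
    Finset.sum_Ico_eq_sum_range]
  refine Finset.sum_congr (by norm_num) fun s hs => ?_
  rw [show 2*k+1-1 = 2*k from by omega, show 1 + s - 1 = s from by omega,
    show 2*k+1-(1+s) = 2*k-s from by omega, show 1 + s = s + 1 from by omega]
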